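/- arXiv:0807.1549 — 2 statements merged into one kernel-verified Lean document; each statement's English description precedes it below -/
import Mathlib

section
/- For all k ∈ ℕ, the number of points in the iterated point–line construction strictly increases at every stage: n_{k+1} ≥ n_k + 1. -/
/-!
If `P (k + 1) = P k`, then `S = P k` is a finite set in which any two distinct lines spanned by
`S` meet in a point of `S` (they do meet, since lines of `L k` are never parallel). No such set
contains four points in general position. By the Sylvester–Gallai theorem (Kelly's proof: a
point–line pair at minimal positive distance spans an ordinary line) `S` has an ordinary line
`ab`, so every line spanned by `S` meets it in `a` or `b`. For each of the four points `x`, two of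
the three lines joining `x` to the others then pass through the same point of `{a, b}`, which
forces `x ∈ {a, b}`.
-/

noncomputable section

/-- Points of the real plane. -/
abbrev Pt := ℝ × ℝ

/-- Lines are affine subspaces of the plane (we restrict to 1-dimensional ones via `IsLine`). -/
abbrev Ln := AffineSubspace ℝ Pt

/-- A line is a 1-dimensional affine subspace of `ℝ²`. -/
def IsLine (l : Ln) : Prop := Module.finrank ℝ l.direction = 1

/-- The line through two (distinct) points. -/
def lineThrough (p q : Pt) : Ln := affineSpan ℝ {p, q}

/-- The iterated point–line construction: `P 1` is a set of four points in general position,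
`L 1` is the set of lines through pairs of them; `P (k+1)` adds all intersection points of
pairs of distinct lines of `L k`, and `L (k+1)` adds all lines through pairs of distinct
points of `P (k+1)`.  No two distinct lines of any `L k` are parallel. -/
structure IterConfig where
  P : ℕ → Set Pt
  L : ℕ → Set Ln
  card_P1 : (P 1).ncard = 4
  genPos : ∀ p ∈ P 1, ∀ q ∈ P 1, ∀ r ∈ P 1,
    p ≠ q → p ≠ r → q ≠ r → ¬ Collinear ℝ ({p, q, r} : Set Pt)
  L1_def : L 1 = {l | ∃ p ∈ P 1, ∃ q ∈ P 1, p ≠ q ∧ l = lineThrough p q}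
  P_succ : ∀ k, 1 ≤ k →
    P (k + 1) = P k ∪ {x | ∃ l ∈ L k, ∃ l' ∈ L k, l ≠ l' ∧ x ∈ l ∧ x ∈ l'}
  L_succ : ∀ k, 1 ≤ k →
    L (k + 1) = L k ∪ {l | ∃ p ∈ P (k + 1), ∃ q ∈ P (k + 1), p ≠ q ∧ l = lineThrough p q}
  noParallel : ∀ k, 1 ≤ k → ∀ l ∈ L k, ∀ l' ∈ L k, l ≠ l' →
    AffineSubspace.direction l ≠ AffineSubspace.direction l'

/-- `n k`, the number of points at the beginning of stage `k`. -/
def nPts (C : IterConfig) (k : ℕ) : ℕ := (C.P k).ncard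

/-- `m k`, the number of lines at the beginning of stage `k`. -/
def nLns (C : IterConfig) (k : ℕ) : ℕ := (C.L k).ncard

/-- `d k p`, the degree of a point: the number of lines of `L k` incident to `p`. -/
def ptDeg (C : IterConfig) (k : ℕ) (p : Pt) : ℕ := {l | l ∈ C.L k ∧ p ∈ l}.ncard

/-- `δ k`, the minimum degree of a point of `P k`. -/
def minDeg (C : IterConfig) (k : ℕ) : ℕ := sInf {d | ∃ p ∈ C.P k, d = ptDeg C k p}

lemma isLine_lineThrough {p q : Pt} (hpq : p ≠ q) : IsLine (lineThrough p q) := by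
  rw [IsLine, lineThrough, direction_affineSpan, vectorSpan_pair]
  exact finrank_span_singleton (vsub_ne_zero.2 hpq)

namespace IsLine

variable {l l' : Ln}

lemma lineThrough_eq (hl : IsLine l) {x y : Pt} (hx : x ∈ l) (hy : y ∈ l) (hxy : x ≠ y) :
    lineThrough x y = l := by
  have hle : lineThrough x y ≤ l := affineSpan_pair_le_of_mem_of_mem hx hy
  refine AffineSubspace.eq_of_direction_eq_of_nonempty_of_le ?_
    ⟨x, left_mem_affineSpan_pair ℝ x y⟩ hle
  refine Submodule.eq_of_le_of_finrank_eq (AffineSubspace.direction_le hle) ?_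
  rw [isLine_lineThrough hxy, hl]

lemma inter_subsingleton (hl : IsLine l) (hl' : IsLine l') (hne : l ≠ l') :
    ((l : Set Pt) ∩ l').Subsingleton := by
  rintro x ⟨hx, hx'⟩ y ⟨hy, hy'⟩
  by_contra hxy
  exact hne ((hl.lineThrough_eq hx hy hxy).symm.trans (hl'.lineThrough_eq hx' hy' hxy))

lemma nonempty (hl : IsLine l) : (l : Set Pt).Nonempty := by
  rw [AffineSubspace.nonempty_iff_ne_bot]
  rintro rfl
  rw [IsLine, AffineSubspace.direction_bot, finrank_bot] at hl
  exact zero_ne_one hl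

lemma inter_nonempty (hl : IsLine l) (hl' : IsLine l') (hd : l.direction ≠ l'.direction) :
    ((l : Set Pt) ∩ l').Nonempty := by
  refine AffineSubspace.inter_nonempty_of_nonempty_of_sup_direction_eq_top hl.nonempty
    hl'.nonempty (Submodule.eq_top_of_finrank_eq (le_antisymm (Submodule.finrank_le _) ?_))
  have hlt : l.direction < l.direction ⊔ l'.direction := by
    refine lt_of_le_of_ne le_sup_left fun h => hd ?_
    exact (Submodule.eq_of_le_of_finrank_eq (h ▸ le_sup_right) (by rw [hl, hl'])).symm
  have := Submodule.finrank_lt_finrank_of_lt hlt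
  rw [hl] at this
  simp only [Module.finrank_prod, Module.finrank_self]
  omega

end IsLine

lemma mem_lineThrough_iff {a b c : Pt} : c ∈ lineThrough a b ↔ ∃ r : ℝ, r • (b - a) = c - a := by
  conv_lhs => rw [← vsub_vadd c a]
  exact vadd_left_mem_affineSpan_pair

lemma collinear_of_mem_lineThrough {a b c : Pt} (h : c ∈ lineThrough a b) :
    Collinear ℝ ({a, b, c} : Set Pt) := by
  refine (collinear_insert_of_mem_affineSpan_pair h).subset fun w hw => ?_
  simp only [Set.mem_insert_iff, Set.mem_singleton_iff] at hw ⊢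
  tauto

lemma eq_of_mem_lineThrough_of_not_collinear {x y z c : Pt}
    (h : ¬ Collinear ℝ ({x, y, z} : Set Pt)) (hy : c ∈ lineThrough x y)
    (hz : c ∈ lineThrough x z) : c = x := by
  have hne : lineThrough x y ≠ lineThrough x z := fun he =>
    h (collinear_of_mem_lineThrough (he ▸ right_mem_affineSpan_pair ℝ x z))
  exact (isLine_lineThrough (ne₁₂_of_not_collinear h)).inter_subsingleton
    (isLine_lineThrough (ne₁₃_of_not_collinear h)) hne ⟨hy, hz⟩
    ⟨left_mem_affineSpan_pair ℝ x y, left_mem_affineSpan_pair ℝ x z⟩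

def cross (u v : Pt) : ℝ := u.1 * v.2 - u.2 * v.1

lemma exists_smul_eq_iff_cross_eq_zero {u w : Pt} (hu : u ≠ 0) :
    (∃ r : ℝ, r • u = w) ↔ cross u w = 0 := by
  constructor
  · rintro ⟨r, rfl⟩
    simp only [cross, Prod.smul_fst, Prod.smul_snd, smul_eq_mul]
    ring
  intro h
  unfold cross at h
  by_cases hu1 : u.1 = 0
  · have hu2 : u.2 ≠ 0 := fun hu2 => hu (Prod.ext hu1 hu2)
    refine ⟨w.2 / u.2, Prod.ext ?_ ?_⟩ <;> simp only [Prod.smul_fst, Prod.smul_snd, smul_eq_mul]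
    · rw [hu1, mul_zero]
      simpa [hu1, hu2, eq_comm] using h
    · field_simp
  · refine ⟨w.1 / u.1, Prod.ext ?_ ?_⟩ <;> simp only [Prod.smul_fst, Prod.smul_snd, smul_eq_mul]
    · field_simp
    · field_simp
      linarith

lemma collinear_iff_cross_eq_zero {a b c : Pt} :
    Collinear ℝ ({a, b, c} : Set Pt) ↔ cross (b - a) (c - a) = 0 := by
  rcases eq_or_ne a b with rfl | hab
  · simp [cross, collinear_pair]
  rw [← exists_smul_eq_iff_cross_eq_zero (sub_ne_zero.2 hab.symm), ← mem_lineThrough_iff]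
  exact ⟨fun h => h.mem_affineSpan_of_mem_of_ne (by simp) (by simp) (by simp) hab,
    collinear_of_mem_lineThrough⟩

lemma exists_ne_sub_sq_le (t a b c : ℝ) (hab : a ≠ b) (hac : a ≠ c) (hbc : b ≠ c) :
    ∃ α ∈ ({a, b, c} : Set ℝ), ∃ β ∈ ({a, b, c} : Set ℝ), α ≠ β ∧ (α - β) ^ 2 ≤ (β - t) ^ 2 := by
  have same_side : ∀ x ∈ ({a, b, c} : Set ℝ), ∀ y ∈ ({a, b, c} : Set ℝ), x ≠ y →
      0 ≤ (x - t) * (y - t) →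
      ∃ α ∈ ({a, b, c} : Set ℝ), ∃ β ∈ ({a, b, c} : Set ℝ), α ≠ β ∧ (α - β) ^ 2 ≤ (β - t) ^ 2 := by
    intro x hx y hy hxy h
    rcases le_total ((x - t) ^ 2) ((y - t) ^ 2) with hle | hle
    · exact ⟨x, hx, y, hy, hxy, by nlinarith⟩
    · exact ⟨y, hy, x, hx, hxy.symm, by nlinarith⟩
  by_cases h₁ : 0 ≤ (a - t) * (b - t)
  · exact same_side a (by simp) b (by simp) hab h₁
  by_cases h₂ : 0 ≤ (a - t) * (c - t)
  · exact same_side a (by simp) c (by simp) hac h₂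
  -- `b` and `c` both lie on the other side of `t` from `a`
  refine same_side b (by simp) c (by simp) hbc ?_
  nlinarith [sq_nonneg (a - t), mul_pos_of_neg_of_neg (not_le.1 h₁) (not_le.1 h₂)]

lemma cross_add_smul_sub_add_smul_sub (x v p : Pt) (α β : ℝ) :
    cross (x + β • v - p) (x + α • v - p) = (α - β) * cross v (p - x) := by
  simp only [cross, Prod.fst_sub, Prod.snd_sub, Prod.fst_add, Prod.snd_add, Prod.smul_fst,
    Prod.smul_snd, smul_eq_mul]
  ring

def lineDistSq (a b p : Pt) : ℝ := cross (b - a) (p - a) ^ 2 / ((b - a).1 ^ 2 + (b - a).2 ^ 2)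

/-- Kelly's descent step. The quotient `t` in the hypothesis is the parameter of the foot of the
perpendicular from `p` to the line `x + ℝ • v`; if `|α - β| ≤ |β - t|`, then `x + α • v` is closer
to the line through `p` and `x + β • v` than `p` is to `x + ℝ • v`. -/
lemma lineDistSq_lt_of_sub_sq_le {x v p : Pt} {α β : ℝ} (hD : cross v (p - x) ≠ 0)
    (h : (α - β) ^ 2 ≤ (β - ((p - x).1 * v.1 + (p - x).2 * v.2) / (v.1 ^ 2 + v.2 ^ 2)) ^ 2) :
    lineDistSq p (x + β • v) (x + α • v) < lineDistSq x (x + v) p := by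
  set D := cross v (p - x)
  set N := v.1 ^ 2 + v.2 ^ 2
  set T := (p - x).1 * v.1 + (p - x).2 * v.2
  have hN : 0 < N := by
    have hv : v ≠ 0 := by rintro rfl; simp [D, cross] at hD
    have : v.1 ≠ 0 ∨ v.2 ≠ 0 := by contrapose! hv; exact Prod.ext hv.1 hv.2
    rcases this with h | h <;> positivity
  set M := (x + β • v - p).1 ^ 2 + (x + β • v - p).2 ^ 2
  have hM : M * N = D ^ 2 + (β * N - T) ^ 2 := by
    simp only [M, N, D, T, cross, Prod.fst_sub, Prod.snd_sub, Prod.fst_add, Prod.snd_add,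
      Prod.smul_fst, Prod.smul_snd, smul_eq_mul]
    ring
  have hD2 : 0 < D ^ 2 := by positivity
  have hM0 : 0 < M := by nlinarith [sq_nonneg (β * N - T)]
  have hαβ : (α - β) ^ 2 * N ^ 2 ≤ (β * N - T) ^ 2 := by
    have : (β - T / N) ^ 2 * N ^ 2 = (β * N - T) ^ 2 := by field_simp
    nlinarith [mul_le_mul_of_nonneg_right h (sq_nonneg N)]
  unfold lineDistSq
  rw [cross_add_smul_sub_add_smul_sub, add_sub_cancel_left, div_lt_div_iff₀ hM0 hN]
  nlinarith [mul_le_mul_of_nonneg_left hαβ hD2.le]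

theorem sylvester_gallai {S : Set Pt} (hS : S.Finite) {p q r : Pt} (hp : p ∈ S) (hq : q ∈ S)
    (hr : r ∈ S) (hpqr : ¬ Collinear ℝ ({p, q, r} : Set Pt)) :
    ∃ a ∈ S, ∃ b ∈ S, a ≠ b ∧ ∀ z ∈ S, z ∈ lineThrough a b → z = a ∨ z = b := by
  let T : Set (Pt × Pt × Pt) := {w | w.1 ∈ S ∧ w.2.1 ∈ S ∧ w.2.2 ∈ S ∧
    cross (w.2.1 - w.1) (w.2.2 - w.1) ≠ 0}
  have hT : T.Finite := (hS.prod (hS.prod hS)).subset fun w hw => ⟨hw.1, hw.2.1, hw.2.2.1⟩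
  obtain ⟨⟨x, y, p₀⟩, ⟨hx, hy, hp₀, hD⟩, hmin⟩ :=
    T.exists_min_image (fun w => lineDistSq w.1 w.2.1 w.2.2) hT
      ⟨(p, q, r), hp, hq, hr, mt collinear_iff_cross_eq_zero.2 hpqr⟩
  have hxy : x ≠ y := by rintro rfl; simp [cross] at hD
  refine ⟨x, hx, y, hy, hxy, fun z hz hzl => ?_⟩
  by_contra! hzxy
  set v := y - x
  obtain ⟨s, hs⟩ := mem_lineThrough_iff.1 hzl
  have hmem : ∀ γ ∈ ({0, 1, s} : Set ℝ), x + γ • v ∈ S := by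
    rintro γ (rfl | rfl | rfl)
    · simpa using hx
    · simpa [v] using hy
    · rwa [hs, add_sub_cancel]
  have hs0 : 0 ≠ s := by rintro rfl; exact hzxy.1 (sub_eq_zero.1 (by simpa using hs.symm))
  have hs1 : 1 ≠ s := by rintro rfl; exact hzxy.2 (by simpa [v] using hs.symm)
  obtain ⟨α, hα, β, hβ, hαβ, hle⟩ := exists_ne_sub_sq_le
    (((p₀ - x).1 * v.1 + (p₀ - x).2 * v.2) / (v.1 ^ 2 + v.2 ^ 2)) 0 1 s one_ne_zero.symm hs0 hs1
  have hnew : (p₀, x + β • v, x + α • v) ∈ T := ⟨hp₀, hmem β hβ, hmem α hα, by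
    rw [cross_add_smul_sub_add_smul_sub]; exact mul_ne_zero (sub_ne_zero.2 hαβ) hD⟩
  have hlt := lineDistSq_lt_of_sub_sq_le hD hle
  rw [add_sub_cancel] at hlt
  exact (hmin _ hnew).not_gt hlt

def IsMeetClosed (S : Set Pt) : Prop :=
  ∀ a ∈ S, ∀ b ∈ S, ∀ c ∈ S, ∀ d ∈ S, a ≠ b → c ≠ d → lineThrough a b ≠ lineThrough c d →
    ∃ x ∈ S, x ∈ lineThrough a b ∧ x ∈ lineThrough c d

lemma eq_or_eq_of_forall_mem_lineThrough {Q : Set Pt} (hQ : Q.ncard = 4)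
    (hgen : ∀ p ∈ Q, ∀ q ∈ Q, ∀ r ∈ Q, p ≠ q → p ≠ r → q ≠ r → ¬ Collinear ℝ ({p, q, r} : Set Pt))
    {a b x : Pt} (hx : x ∈ Q) (h : ∀ y ∈ Q, y ≠ x → a ∈ lineThrough x y ∨ b ∈ lineThrough x y) :
    x = a ∨ x = b := by
  classical
  by_contra! hxab
  -- the point of `{a, b}` on the line `xy` determines `y`: two lines through `x` meet only at `x`
  let f : Pt → Pt := fun y => if a ∈ lineThrough x y then a else b
  have hf : ∀ y ∈ Q \ {x}, f y ∈ lineThrough x y := fun y hy => by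
    unfold f; split_ifs with ha
    · exact ha
    · exact (h y hy.1 hy.2).resolve_left ha
  have hinj : Set.InjOn f (Q \ {x}) := by
    intro y hy y' hy' hyy'
    by_contra hne
    have hfx := eq_of_mem_lineThrough_of_not_collinear (hgen x hx y hy.1 y' hy'.1
      (Ne.symm hy.2) (Ne.symm hy'.2) hne) (hf y hy) (hyy' ▸ hf y' hy')
    unfold f at hfx
    split_ifs at hfx
    exacts [hxab.1 hfx.symm, hxab.2 hfx.symm]
  have hmaps : ∀ y ∈ Q \ {x}, f y ∈ ({a, b} : Set Pt) := fun y _ => by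
    unfold f; split_ifs <;> simp
  have := (Set.ncard_le_ncard_of_injOn f hmaps hinj).trans (Set.ncard_insert_le a {b})
  rw [Set.ncard_sdiff_singleton_of_mem hx, hQ, Set.ncard_singleton] at this
  omega

lemma IsMeetClosed.infinite {S : Set Pt} (hS : IsMeetClosed S) {Q : Set Pt} (hQS : Q ⊆ S)
    (hQ : Q.ncard = 4)
    (hgen : ∀ p ∈ Q, ∀ q ∈ Q, ∀ r ∈ Q, p ≠ q → p ≠ r → q ≠ r →
      ¬ Collinear ℝ ({p, q, r} : Set Pt)) :
    S.Infinite := by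
  intro hfin
  have hQfin : Q.Finite := hfin.subset hQS
  obtain ⟨p, hp, q, hq, r, hr, hpq, hpr, hqr⟩ := (Set.two_lt_ncard hQfin).1 (by omega)
  obtain ⟨a, ha, b, hb, hab, hord⟩ :=
    sylvester_gallai hfin (hQS hp) (hQS hq) (hQS hr) (hgen p hp q hq r hr hpq hpr hqr)
  have hline : ∀ c ∈ S, ∀ d ∈ S, c ≠ d → a ∈ lineThrough c d ∨ b ∈ lineThrough c d := by
    intro c hc d hd hcd
    by_cases heq : lineThrough c d = lineThrough a b
    · exact .inl (heq ▸ left_mem_affineSpan_pair ℝ a b)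
    obtain ⟨x, hx, hxcd, hxab⟩ := hS c hc d hd a ha b hb hcd hab heq
    rcases hord x hx hxab with rfl | rfl
    exacts [.inl hxcd, .inr hxcd]
  have hsub : Q ⊆ {a, b} := fun x hx =>
    eq_or_eq_of_forall_mem_lineThrough hQ hgen hx fun y hy hyx =>
      hline x (hQS hx) y (hQS hy) hyx.symm
  have := Set.ncard_le_ncard hsub (Set.toFinite _)
  rw [hQ, Set.ncard_pair hab] at this
  omega

lemma Set.Finite.setOf_mem_two_of_pairwise_subsingleton {α A : Type*} [SetLike A α] {L : Set A}
    (hL : L.Finite)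
    (h : L.Pairwise fun l l' => ((l : Set α) ∩ l').Subsingleton) :
    {x : α | ∃ l ∈ L, ∃ l' ∈ L, l ≠ l' ∧ x ∈ l ∧ x ∈ l'}.Finite := by
  let pairs : Set (A × A) := {ll | ll.1 ∈ L ∧ ll.2 ∈ L ∧ ll.1 ≠ ll.2}
  have hpairs : pairs.Finite := (hL.prod hL).subset fun ll hll => ⟨hll.1, hll.2.1⟩
  refine (hpairs.biUnion fun ll hll => (h hll.1 hll.2.1 hll.2.2).finite).subset ?_
  rintro x ⟨l, hl, l', hl', hne, hx, hx'⟩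
  exact Set.mem_biUnion (x := (l, l')) ⟨hl, hl', hne⟩ ⟨hx, hx'⟩

namespace IterConfig

variable (C : IterConfig) {k : ℕ}

lemma P_subset_succ (hk : 1 ≤ k) : C.P k ⊆ C.P (k + 1) := by
  rw [C.P_succ k hk]
  exact Set.subset_union_left

lemma P_one_subset (hk : 1 ≤ k) : C.P 1 ⊆ C.P k := by
  induction k, hk using Nat.le_induction with
  | base => exact subset_rfl
  | succ j hj ih => exact ih.trans (C.P_subset_succ hj)

lemma lineThrough_mem_L (hk : 1 ≤ k) {p q : Pt} (hp : p ∈ C.P k) (hq : q ∈ C.P k) (hpq : p ≠ q) :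
    lineThrough p q ∈ C.L k := by
  rcases hk.eq_or_lt with rfl | hk
  · rw [C.L1_def]
    exact ⟨p, hp, q, hq, hpq, rfl⟩
  · obtain ⟨j, rfl⟩ : ∃ j, k = j + 1 := ⟨k - 1, by omega⟩
    rw [C.L_succ j (by omega)]
    exact .inr ⟨p, hp, q, hq, hpq, rfl⟩

lemma exists_eq_lineThrough (hk : 1 ≤ k) {l : Ln} (hl : l ∈ C.L k) :
    ∃ p ∈ C.P k, ∃ q ∈ C.P k, p ≠ q ∧ l = lineThrough p q := by
  induction k, hk using Nat.le_induction generalizing l with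
  | base => rwa [C.L1_def] at hl
  | succ j hj ih =>
    rw [C.L_succ j hj] at hl
    rcases hl with hl | hl
    · obtain ⟨p, hp, q, hq, hpq, rfl⟩ := ih hl
      exact ⟨p, C.P_subset_succ hj hp, q, C.P_subset_succ hj hq, hpq, rfl⟩
    · exact hl

lemma isLine_of_mem_L (hk : 1 ≤ k) {l : Ln} (hl : l ∈ C.L k) : IsLine l := by
  obtain ⟨p, -, q, -, hpq, rfl⟩ := C.exists_eq_lineThrough hk hl
  exact isLine_lineThrough hpq

lemma finite_P (hk : 1 ≤ k) : (C.P k).Finite := by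
  induction k, hk using Nat.le_induction with
  | base => exact Set.finite_of_ncard_ne_zero (by rw [C.card_P1]; norm_num)
  | succ j hj ih =>
    have hL : (C.L j).Finite := (ih.image2 lineThrough ih).subset fun l hl => by
      obtain ⟨p, hp, q, hq, -, rfl⟩ := C.exists_eq_lineThrough hj hl
      exact Set.mem_image2_of_mem hp hq
    rw [C.P_succ j hj]
    exact ih.union (hL.setOf_mem_two_of_pairwise_subsingleton fun l hl l' hl' hne =>
      (C.isLine_of_mem_L hj hl).inter_subsingleton (C.isLine_of_mem_L hj hl') hne)

lemma isMeetClosed_of_P_succ_subset (hk : 1 ≤ k) (h : C.P (k + 1) ⊆ C.P k) :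
    IsMeetClosed (C.P k) := by
  intro a ha b hb c hc d hd hab hcd hne
  have hl := C.lineThrough_mem_L hk ha hb hab
  have hl' := C.lineThrough_mem_L hk hc hd hcd
  obtain ⟨x, hx, hx'⟩ := (isLine_lineThrough hab).inter_nonempty (isLine_lineThrough hcd)
    (C.noParallel k hk _ hl _ hl' hne)
  refine ⟨x, h ?_, hx, hx'⟩
  rw [C.P_succ k hk]
  exact .inr ⟨_, hl, _, hl', hne, hx, hx'⟩

end IterConfig

/-- The number of points strictly increases at every stage: `n (k+1) ≥ n k + 1`. -/
theorem stmt_1 (C : IterConfig) (k : ℕ) (hk : 1 ≤ k) :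
    nPts C k + 1 ≤ nPts C (k + 1) := by
  by_contra! hlt
  have hstall : C.P (k + 1) ⊆ C.P k :=
    (Set.eq_of_subset_of_ncard_le (C.P_subset_succ hk) (by unfold nPts at hlt; omega)
      (C.finite_P (by omega))).ge
  exact (C.isMeetClosed_of_P_succ_subset hk hstall).infinite (C.P_one_subset hk)
    C.card_P1 C.genPos (C.finite_P hk)
end
end

section
/- There exists a positive real constant c such that the following holds. Let N ≥ 4 and k ≥ 2 be integers, and let F₁, F₂, …, F_N be families of lines in ℝ², each family consisting of exactly k pairwise parallel lines, such that no line of one family is parallel to a line of another family. Let P be the set of all points lying at the intersection of some line of F₁ with some line of F_j for some 2 ≤ j ≤ N. Then |P| ≥ c · k² · N^{1/2}. -/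
noncomputable section

/-!
In coordinates where the lines of `F 0` are the verticals `X = a`, `a ∈ A`, the other
`(N - 1) k` lines are graphs `Y = s X + b`. Cut these at the verticals: the pieces between
consecutive verticals are `(k - 1)(N - 1) k` edges of a drawing whose vertex set is `P`, and any
two lines cross at most once, so there are at most `((N - 1) k)²` crossings. Between two
consecutive verticals the edges form a bipartite graph drawn on two parallel lines, so every
vertex subset satisfies `2 e ≤ 4 v + x`. Averaging this over random vertex subsets, as in the
crossing lemma, gives `e ≤ 4 |P|` or `e³ ≤ 16 |P|² x`, and either way `|P| ≥ k² √N / 16`.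
-/

open Finset

namespace Finset

variable {α : Type*}

/-- The probability that a random subset of `V`, containing each element independently with
probability `p`, equals `S`. -/
def sampleWeight (p : ℝ) (V S : Finset α) : ℝ := p ^ #S * (1 - p) ^ (#V - #S)

lemma sampleWeight_nonneg {p : ℝ} (hp₀ : 0 ≤ p) (hp₁ : p ≤ 1) (V S : Finset α) :
    0 ≤ sampleWeight p V S := by
  unfold sampleWeight
  have : 0 ≤ 1 - p := by linarith
  positivity

lemma sum_sampleWeight_filter_superset [DecidableEq α] (p : ℝ) {T V : Finset α} (hTV : T ⊆ V) :
    ∑ S ∈ V.powerset with T ⊆ S, sampleWeight p V S = p ^ #T := by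
  set g : α → ℝ := fun a => if a ∈ T then 0 else 1 - p
  have hterm : ∀ S ∈ V.powerset, (∏ _a ∈ S, p) * ∏ a ∈ V \ S, g a =
      if T ⊆ S then sampleWeight p V S else 0 := by
    intro S hS
    have hSV := mem_powerset.1 hS
    split_ifs with hTS
    · rw [prod_const, prod_congr rfl fun a ha => if_neg fun haT => (mem_sdiff.1 ha).2 (hTS haT),
        prod_const, card_sdiff_of_subset hSV, sampleWeight]
    · obtain ⟨a, haT, haS⟩ := not_subset.1 hTS
      rw [prod_eq_zero (f := g) (mem_sdiff.2 ⟨hTV haT, haS⟩) (if_pos haT), mul_zero]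
  calc ∑ S ∈ V.powerset with T ⊆ S, sampleWeight p V S
      = ∑ S ∈ V.powerset, (∏ _a ∈ S, p) * ∏ a ∈ V \ S, g a := by
        rw [sum_filter, sum_congr rfl hterm]
    _ = ∏ a ∈ V, (p + g a) := (prod_add _ _ _).symm
    _ = p ^ #T := by
        rw [prod_congr rfl fun a _ => show p + g a = if a ∈ T then p else 1 by
          unfold g; split_ifs <;> ring, prod_ite_mem, prod_const,
          inter_eq_right.2 hTV]

lemma sum_sampleWeight_mul_card_filter_subset [DecidableEq α] {ι : Type*} (p : ℝ) (V : Finset α)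
    (J : Finset ι) (T : ι → Finset α) (hT : ∀ j ∈ J, T j ⊆ V) :
    ∑ S ∈ V.powerset, sampleWeight p V S * #{j ∈ J | T j ⊆ S} = ∑ j ∈ J, p ^ #(T j) := by
  simp_rw [card_filter, Nat.cast_sum, Nat.cast_ite, Nat.cast_one, Nat.cast_zero, mul_sum,
    mul_ite, mul_one, mul_zero]
  rw [sum_comm]
  exact sum_congr rfl fun j hj => by rw [← sum_filter, sum_sampleWeight_filter_superset p (hT j hj)]

end Finset

lemma cube_le_of_forall_two_mul_sq_le {e n x : ℝ} (hn : 0 < n) (hen : 4 * n < e)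
    (h : ∀ p : ℝ, 0 ≤ p → p ≤ 1 → 2 * e * p ^ 2 ≤ 4 * n * p + x * p ^ 4) :
    e ^ 3 ≤ 16 * n ^ 2 * x := by
  have he : 0 < e := by linarith
  -- the optimal sampling probability
  have hp := h (4 * n / e) (by positivity) ((div_le_one he).2 hen.le)
  field_simp at hp
  have key : 16 * n ^ 2 * e ^ 3 ≤ 16 * n ^ 2 * (16 * n ^ 2 * x) := by nlinarith
  exact le_of_mul_le_mul_left key (by positivity)

theorem crossing_bound {α ι κ : Type*} [DecidableEq α] (V : Finset α) (E : Finset ι)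
    (X : Finset κ) (ends : ι → Finset α) (quad : κ → Finset α)
    (hends : ∀ e ∈ E, ends e ⊆ V ∧ #(ends e) = 2) (hquad : ∀ x ∈ X, quad x ⊆ V ∧ #(quad x) = 4)
    (hplanar : ∀ S ⊆ V, 2 * #{e ∈ E | ends e ⊆ S} ≤ 4 * #S + #{x ∈ X | quad x ⊆ S}) :
    #E ≤ 4 * #V ∨ #E ^ 3 ≤ 16 * #V ^ 2 * #X := by
  refine or_iff_not_imp_left.2 fun hEV => ?_
  obtain ⟨e, he⟩ : E.Nonempty := card_pos.1 (by omega)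
  have hV : 0 < #V := by
    have := card_le_card (hends e he).1
    rw [(hends e he).2] at this
    omega
  -- average the planar bound over random `p`-subsets of `V`
  have hexp : ∀ p : ℝ, 0 ≤ p → p ≤ 1 →
      2 * (#E : ℝ) * p ^ 2 ≤ 4 * #V * p + #X * p ^ 4 := by
    intro p hp₀ hp₁
    have hE : ∑ S ∈ V.powerset, sampleWeight p V S * #{e ∈ E | ends e ⊆ S} = #E * p ^ 2 := by
      rw [sum_sampleWeight_mul_card_filter_subset p V E ends fun e he => (hends e he).1,
        sum_congr rfl fun e he => by rw [(hends e he).2], sum_const, nsmul_eq_mul]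
    have hX : ∑ S ∈ V.powerset, sampleWeight p V S * #{x ∈ X | quad x ⊆ S} = #X * p ^ 4 := by
      rw [sum_sampleWeight_mul_card_filter_subset p V X quad fun x hx => (hquad x hx).1,
        sum_congr rfl fun x hx => by rw [(hquad x hx).2], sum_const, nsmul_eq_mul]
    have hS : ∑ S ∈ V.powerset, sampleWeight p V S * #S = #V * p := by
      have hsingle : ∀ S ∈ V.powerset, #{v ∈ V | {v} ⊆ S} = #S := fun S hS => by
        simp_rw [singleton_subset_iff, filter_mem_eq_inter, inter_eq_right.2 (mem_powerset.1 hS)]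
      rw [sum_congr rfl fun S hS => by rw [← hsingle S hS],
        sum_sampleWeight_mul_card_filter_subset p V V _ fun v hv => singleton_subset_iff.2 hv]
      simp
    have hsum := sum_le_sum fun S hS => mul_le_mul_of_nonneg_left
      (by exact_mod_cast hplanar S (mem_powerset.1 hS) :
        2 * (#{e ∈ E | ends e ⊆ S} : ℝ) ≤ 4 * #S + #{x ∈ X | quad x ⊆ S})
      (sampleWeight_nonneg hp₀ hp₁ V S)
    simp only [mul_add, mul_left_comm _ (2 : ℝ), mul_left_comm _ (4 : ℝ), ← mul_sum,
      sum_add_distrib, hE, hX, hS] at hsum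
    linarith
  exact_mod_cast cube_le_of_forall_two_mul_sq_le (by exact_mod_cast hV)
    (by exact_mod_cast not_le.1 hEV) hexp

namespace LineGrid

def inversions (E : Finset (ℝ × ℝ)) : Finset ((ℝ × ℝ) × (ℝ × ℝ)) :=
  {z ∈ E ×ˢ E | (z.1.1 - z.2.1) * (z.1.2 - z.2.2) < 0}

lemma inversions_mono {E E' : Finset (ℝ × ℝ)} (h : E' ⊆ E) : inversions E' ⊆ inversions E :=
  filter_subset_filter _ (product_subset_product h h)

lemma card_le_card_image_fst_add_card_image_snd {E : Finset (ℝ × ℝ)}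
    (hchain : ∀ e ∈ E, ∀ e' ∈ E, 0 ≤ (e.1 - e'.1) * (e.2 - e'.2)) :
    #E ≤ #(E.image Prod.fst) + #(E.image Prod.snd) := by
  induction E using strongInduction with
  | H E ih =>
  rcases E.eq_empty_or_nonempty with rfl | hne
  · simp
  obtain ⟨m, hm, hmax⟩ := E.exists_max_image (fun e => e.1 + e.2) hne
  have hle : ∀ e ∈ E, e.1 ≤ m.1 ∧ e.2 ≤ m.2 := fun e he => by
    have := hchain e he m hm
    have := hmax e he
    constructor <;> nlinarith
  -- `m` is the top of the chain, so it is alone on its column or alone on its row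
  have hnew : m.1 ∉ (E.erase m).image Prod.fst ∨ m.2 ∉ (E.erase m).image Prod.snd := by
    by_contra! ⟨h₁, h₂⟩
    obtain ⟨e, he, he1⟩ := mem_image.1 h₁
    obtain ⟨e', he', he2⟩ := mem_image.1 h₂
    have h2 : e.2 < m.2 := lt_of_le_of_ne (hle e (mem_of_mem_erase he)).2
      fun h => ne_of_mem_erase he (Prod.ext he1 h)
    have h1 : e'.1 < m.1 := lt_of_le_of_ne (hle e' (mem_of_mem_erase he')).1
      fun h => ne_of_mem_erase he' (Prod.ext h he2)
    have := hchain e (mem_of_mem_erase he) e' (mem_of_mem_erase he')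
    rw [he1, he2] at this
    nlinarith
  have ih' := ih (E.erase m) (erase_ssubset hm) fun e he e' he' =>
    hchain e (mem_of_mem_erase he) e' (mem_of_mem_erase he')
  rw [← insert_erase hm, image_insert, image_insert, card_insert_of_notMem (notMem_erase m E)]
  rcases hnew with h | h
  · rw [card_insert_of_notMem h]
    have := card_le_card (subset_insert m.2 ((E.erase m).image Prod.snd))
    omega
  · rw [card_insert_of_notMem h]
    have := card_le_card (subset_insert m.1 ((E.erase m).image Prod.fst))
    omega

/-- Read `e ∈ E` as the segment from `(0, e.1)` to `(1, e.2)`; inversions are then crossing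
pairs. Without crossings the segments form a chain, and deleting one segment of a crossing pair
destroys two inversions. -/
lemma two_mul_card_le_add_card_inversions (E : Finset (ℝ × ℝ)) :
    2 * #E ≤ 2 * #(E.image Prod.fst) + 2 * #(E.image Prod.snd) + #(inversions E) := by
  induction E using strongInduction with
  | H E ih =>
  by_cases hchain : ∀ e ∈ E, ∀ e' ∈ E, 0 ≤ (e.1 - e'.1) * (e.2 - e'.2)
  · have := card_le_card_image_fst_add_card_image_snd hchain
    omega
  push Not at hchain
  obtain ⟨e₀, he₀, e₁, he₁, hinv⟩ := hchain
  have hne : e₀ ≠ e₁ := by rintro rfl; nlinarith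
  have hpair : {(e₀, e₁), (e₁, e₀)} ⊆ inversions E := by
    simp only [insert_subset_iff, singleton_subset_iff, inversions, mem_filter, mem_product]
    exact ⟨⟨⟨he₀, he₁⟩, hinv⟩, ⟨he₁, he₀⟩, by nlinarith⟩
  have hdisj : Disjoint (inversions (E.erase e₀)) {(e₀, e₁), (e₁, e₀)} := by
    simp only [disjoint_insert_right, disjoint_singleton_right, inversions, mem_filter,
      mem_product, notMem_erase, false_and, and_false, not_false_eq_true, and_self]
  have hinv' : #(inversions (E.erase e₀)) + 2 ≤ #(inversions E) := by
    rw [← card_pair fun h : ((e₀, e₁) : (ℝ × ℝ) × (ℝ × ℝ)) = (e₁, e₀) =>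
      hne (congrArg Prod.fst h), ← card_union_of_disjoint hdisj]
    exact card_le_card (union_subset (inversions_mono (erase_subset e₀ E)) hpair)
  have := ih (E.erase e₀) (erase_ssubset he₀)
  have := card_le_card (image_subset_image (f := Prod.fst) (erase_subset e₀ E))
  have := card_le_card (image_subset_image (f := Prod.snd) (erase_subset e₀ E))
  have := card_erase_add_one he₀
  omega

/-- A non-vertical line is encoded by its slope and intercept `m = (s, b)`. -/
def height (m : ℝ × ℝ) (x : ℝ) : ℝ := m.1 * x + m.2

def graphPt (m : ℝ × ℝ) (x : ℝ) : ℝ × ℝ := (x, height m x)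

def Crosses (m m' : ℝ × ℝ) (x x' : ℝ) : Prop :=
  (height m x - height m' x) * (height m x' - height m' x') < 0

instance (m m' : ℝ × ℝ) (x x' : ℝ) : Decidable (Crosses m m' x x') :=
  inferInstanceAs (Decidable (_ < _))

def edgeEnds (m : ℝ × ℝ) (x x' : ℝ) : Finset (ℝ × ℝ) := {graphPt m x, graphPt m x'}

def crossingQuad (m m' : ℝ × ℝ) (x x' : ℝ) : Finset (ℝ × ℝ) :=
  {graphPt m x, graphPt m' x, graphPt m x', graphPt m' x'}

def gridPoints (A : Finset ℝ) (Λ : Finset (ℝ × ℝ)) : Finset (ℝ × ℝ) :=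
  image₂ (fun a m => graphPt m a) A Λ

lemma card_edgeEnds {m : ℝ × ℝ} {x x' : ℝ} (hx : x ≠ x') : #(edgeEnds m x x') = 2 :=
  card_pair fun h => hx (congrArg Prod.fst h)

lemma card_crossingQuad {m m' : ℝ × ℝ} {x x' : ℝ} (hx : x ≠ x') (h : Crosses m m' x x') :
    #(crossingQuad m m' x x') = 4 := by
  have h₁ : height m x ≠ height m' x := fun he => by simp [Crosses, he] at h
  have h₂ : height m x' ≠ height m' x' := fun he => by simp [Crosses, he] at h
  rw [crossingQuad, card_insert_of_notMem, card_insert_of_notMem, card_pair]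
  all_goals simp [graphPt, h₁, h₂, hx]

lemma height_injective {x x' : ℝ} (hx : x ≠ x') :
    Function.Injective fun m : ℝ × ℝ => (height m x, height m x') := by
  intro m m' h
  simp only [height, Prod.mk.injEq] at h
  have h₁ : m.1 = m'.1 := by
    have : (m.1 - m'.1) * (x - x') = 0 := by linear_combination h.1 - h.2
    simpa [sub_eq_zero, hx] using this
  exact Prod.ext h₁ (by rw [h₁] at h; linarith [h.1])

lemma not_crosses_of_crosses {m m' : ℝ × ℝ} {x y z w : ℝ} (hxy : x < y) (hyz : y ≤ z)
    (hzw : z < w) (h : Crosses m m' x y) : ¬ Crosses m m' z w := by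
  simp only [Crosses, height, not_lt] at *
  set a := m.1 - m'.1
  set b := m.2 - m'.2
  have hg : ∀ t, m.1 * t + m.2 - (m'.1 * t + m'.2) = a * t + b := fun t => by ring
  rw [hg, hg] at h ⊢
  rcases le_total 0 a with ha | ha
  · obtain ⟨-, hy⟩ := (mul_neg_iff.1 h).resolve_left fun h' => by nlinarith [h'.1, h'.2]
    exact mul_nonneg (by nlinarith) (by nlinarith)
  · obtain ⟨-, hy⟩ := (mul_neg_iff.1 h).resolve_right fun h' => by nlinarith [h'.1, h'.2]
    exact mul_nonneg_of_nonpos_of_nonpos (by nlinarith) (by nlinarith)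

lemma slab_bound (Λ S : Finset (ℝ × ℝ)) {x x' : ℝ} (hx : x ≠ x') :
    2 * #{m ∈ Λ | edgeEnds m x x' ⊆ S} ≤ 2 * #{v ∈ S | v.1 = x} + 2 * #{v ∈ S | v.1 = x'} +
      #{z ∈ Λ ×ˢ Λ | Crosses z.1 z.2 x x' ∧ crossingQuad z.1 z.2 x x' ⊆ S} := by
  set Λ' := {m ∈ Λ | edgeEnds m x x' ⊆ S}
  set f := fun m : ℝ × ℝ => (height m x, height m x')
  have hmem : ∀ m ∈ Λ', m ∈ Λ ∧ graphPt m x ∈ S ∧ graphPt m x' ∈ S := fun m hm => by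
    simpa [Λ', edgeEnds, insert_subset_iff] using hm
  have hfst : #((Λ'.image f).image Prod.fst) ≤ #{v ∈ S | v.1 = x} := by
    refine card_le_card_of_injOn (fun y => (x, y)) ?_ fun _ _ _ _ h => congrArg Prod.snd h
    simp only [Set.MapsTo, coe_image, Set.mem_image, coe_filter]
    rintro _ ⟨_, ⟨m, hm, rfl⟩, rfl⟩
    exact ⟨(hmem m hm).2.1, rfl⟩
  have hsnd : #((Λ'.image f).image Prod.snd) ≤ #{v ∈ S | v.1 = x'} := by
    refine card_le_card_of_injOn (fun y => (x', y)) ?_ fun _ _ _ _ h => congrArg Prod.snd h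
    simp only [Set.MapsTo, coe_image, Set.mem_image, coe_filter]
    rintro _ ⟨_, ⟨m, hm, rfl⟩, rfl⟩
    exact ⟨(hmem m hm).2.2, rfl⟩
  have hinv : #(inversions (Λ'.image f)) ≤
      #{z ∈ Λ ×ˢ Λ | Crosses z.1 z.2 x x' ∧ crossingQuad z.1 z.2 x x' ⊆ S} := by
    refine (card_le_card ?_).trans (card_image_le (f := fun z => (f z.1, f z.2)))
    rintro ⟨_, _⟩ hz
    simp only [inversions, mem_filter, mem_product, mem_image] at hz
    obtain ⟨⟨⟨m, hm, rfl⟩, ⟨m', hm', rfl⟩⟩, hlt⟩ := hz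
    refine mem_image.2 ⟨(m, m'), mem_filter.2 ⟨mem_product.2 ⟨(hmem m hm).1, (hmem m' hm').1⟩,
      hlt, ?_⟩, rfl⟩
    simp only [crossingQuad, insert_subset_iff, singleton_subset_iff]
    exact ⟨(hmem m hm).2.1, (hmem m' hm').2.1, (hmem m hm).2.2, (hmem m' hm').2.2⟩
  have := two_mul_card_le_add_card_inversions (Λ'.image f)
  rw [card_image_of_injective _ (height_injective hx)] at this
  omega

lemma card_filter_product_eq_sum {α β : Type*} (s : Finset α) (t : Finset β) (p : α × β → Prop)
    [DecidablePred p] : #{z ∈ s ×ˢ t | p z} = ∑ a ∈ s, #{b ∈ t | p (a, b)} := by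
  simp only [card_filter, sum_product]

lemma sum_card_filter_fst_eq_le {ι : Type*} {s : Finset ι} {g : ι → ℝ} (hg : Set.InjOn g s)
    (S : Finset (ℝ × ℝ)) : ∑ i ∈ s, #{v ∈ S | v.1 = g i} ≤ #S := by
  rw [← sum_image (f := fun a => #{v ∈ S | v.1 = a}) hg, sum_card_fiberwise_eq_card_filter]
  exact card_filter_le _ _

variable (k : ℕ) (c : ℕ → ℝ) (Λ : Finset (ℝ × ℝ))

/-- `(i, m)` is the piece of the line `m` between the columns `c i` and `c (i + 1)`. -/
def gridEdges : Finset (ℕ × (ℝ × ℝ)) := range (k - 1) ×ˢ Λ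

def gridCrossings : Finset (ℕ × (ℝ × ℝ) × (ℝ × ℝ)) :=
  {z ∈ range (k - 1) ×ˢ (Λ ×ˢ Λ) | Crosses z.2.1 z.2.2 (c z.1) (c (z.1 + 1))}

variable {k c}

lemma card_gridCrossings_le (hc : StrictMonoOn c (Set.Iio k)) :
    #(gridCrossings k c Λ) ≤ #Λ ^ 2 := by
  have hc' : ∀ {i j}, i < j → j < k → c i < c j := fun hij hjk =>
    hc (show _ < k by omega) hjk hij
  have hone : ∀ z ∈ Λ ×ˢ Λ,
      #{i ∈ range (k - 1) | Crosses z.1 z.2 (c i) (c (i + 1))} ≤ 1 := by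
    intro z _
    refine card_le_one.2 fun i hi j hj => ?_
    simp only [mem_filter, mem_range] at hi hj
    by_contra hne
    rcases Nat.lt_or_gt_of_ne hne with h | h
    · exact not_crosses_of_crosses (hc' (by omega) (by omega)) (hc.monotoneOn (by simp; omega)
        (by simp; omega) h) (hc' (by omega) (by omega)) hi.2 hj.2
    · exact not_crosses_of_crosses (hc' (by omega) (by omega)) (hc.monotoneOn (by simp; omega)
        (by simp; omega) h) (hc' (by omega) (by omega)) hj.2 hi.2
  calc #(gridCrossings k c Λ)
      = ∑ z ∈ Λ ×ˢ Λ, #{i ∈ range (k - 1) | Crosses z.1 z.2 (c i) (c (i + 1))} := by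
        simp only [gridCrossings, card_filter, sum_product_right]
    _ ≤ ∑ _z ∈ Λ ×ˢ Λ, 1 := sum_le_sum hone
    _ = #Λ ^ 2 := by simp [sq]

lemma two_mul_card_filter_gridEdges_le (hc : StrictMonoOn c (Set.Iio k)) (S : Finset (ℝ × ℝ)) :
    2 * #{e ∈ gridEdges k Λ | edgeEnds e.2 (c e.1) (c (e.1 + 1)) ⊆ S} ≤ 4 * #S +
      #{z ∈ gridCrossings k c Λ | crossingQuad z.2.1 z.2.2 (c z.1) (c (z.1 + 1)) ⊆ S} := by
  have hlt : ∀ i ∈ range (k - 1), c i < c (i + 1) := fun i hi => by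
    simp only [mem_range] at hi
    exact hc (show i < k by omega) (show i + 1 < k by omega) (Nat.lt_succ_self i)
  have hcol : Set.InjOn c (range (k - 1)) :=
    hc.injOn.mono fun i hi => by simp only [coe_range, Set.mem_Iio] at hi ⊢; omega
  have hcol' : Set.InjOn (fun i => c (i + 1)) (range (k - 1)) := fun i hi j hj h =>
    Nat.succ_injective (hc.injOn (by simp at hi ⊢; omega) (by simp at hj ⊢; omega) h)
  have h₁ := sum_card_filter_fst_eq_le hcol S
  have h₂ := sum_card_filter_fst_eq_le hcol' S
  have hslabs := sum_le_sum fun i hi => slab_bound Λ S (hlt i hi).ne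
  simp only [sum_add_distrib, ← mul_sum] at hslabs
  rw [gridEdges, gridCrossings, filter_filter, card_filter_product_eq_sum,
    card_filter_product_eq_sum (range (k - 1)) (Λ ×ˢ Λ)]
  dsimp only
  omega

theorem card_le_or_cube_le_of_strictMonoOn (hc : StrictMonoOn c (Set.Iio k)) :
    (k - 1) * #Λ ≤ 4 * #(gridPoints ((range k).image c) Λ) ∨
      (k - 1) ^ 3 * #Λ ≤ 16 * #(gridPoints ((range k).image c) Λ) ^ 2 := by
  set V := gridPoints ((range k).image c) Λ
  have hpt : ∀ i < k, ∀ m ∈ Λ, graphPt m (c i) ∈ V := fun i hi m hm =>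
    mem_image₂.2 ⟨c i, mem_image_of_mem c (mem_range.2 hi), m, hm, rfl⟩
  have hlt : ∀ i < k - 1, c i < c (i + 1) := fun i hi =>
    hc (show i < k by omega) (show i + 1 < k by omega) (Nat.lt_succ_self i)
  have hbound := crossing_bound V (gridEdges k Λ) (gridCrossings k c Λ)
    (fun e => edgeEnds e.2 (c e.1) (c (e.1 + 1)))
    (fun z => crossingQuad z.2.1 z.2.2 (c z.1) (c (z.1 + 1)))
    (fun e he => by
      obtain ⟨hi, hm⟩ := mem_product.1 he
      rw [mem_range] at hi
      refine ⟨?_, card_edgeEnds (hlt _ hi).ne⟩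
      simp only [edgeEnds, insert_subset_iff, singleton_subset_iff]
      exact ⟨hpt _ (by omega) _ hm, hpt _ (by omega) _ hm⟩)
    (fun z hz => by
      obtain ⟨hz, hcr⟩ := mem_filter.1 hz
      obtain ⟨hi, hm, hm'⟩ := by simpa only [mem_product, mem_range] using hz
      refine ⟨?_, card_crossingQuad (hlt _ hi).ne hcr⟩
      simp only [crossingQuad, insert_subset_iff, singleton_subset_iff]
      exact ⟨hpt _ (by omega) _ hm, hpt _ (by omega) _ hm', hpt _ (by omega) _ hm,
        hpt _ (by omega) _ hm'⟩)
    (fun S _ => two_mul_card_filter_gridEdges_le Λ hc S)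
  rw [gridEdges, card_product, card_range] at hbound
  refine hbound.imp_right fun h => ?_
  rcases Nat.eq_zero_or_pos #Λ with hΛ | hΛ
  · simp [hΛ]
  refine Nat.le_of_mul_le_mul_right ?_ (pow_pos hΛ 2)
  calc (k - 1) ^ 3 * #Λ * #Λ ^ 2 = ((k - 1) * #Λ) ^ 3 := by ring
    _ ≤ 16 * #V ^ 2 * #(gridCrossings k c Λ) := h
    _ ≤ 16 * #V ^ 2 * #Λ ^ 2 := Nat.mul_le_mul_left _ (card_gridCrossings_le Λ hc)

lemma exists_strictMonoOn_image_range {α : Type*} [LinearOrder α] [Inhabited α]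
    (A : Finset α) : ∃ c : ℕ → α, StrictMonoOn c (Set.Iio #A) ∧ (range #A).image c = A := by
  refine ⟨fun i => if h : i < #A then A.orderEmbOfFin rfl ⟨i, h⟩ else default,
    fun i hi j hj hij => ?_, ?_⟩
  · simp only [Set.mem_Iio] at hi hj
    simpa only [dif_pos hi, dif_pos hj] using (A.orderEmbOfFin rfl).strictMono
      (show (⟨i, hi⟩ : Fin #A) < ⟨j, hj⟩ from hij)
  · ext a
    simp only [mem_image, mem_range]
    constructor
    · rintro ⟨i, hi, rfl⟩
      simpa only [dif_pos hi] using A.orderEmbOfFin_mem rfl _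
    · intro ha
      obtain ⟨i, rfl⟩ : a ∈ Set.range (A.orderEmbOfFin rfl) := by
        rw [range_orderEmbOfFin]; exact ha
      exact ⟨i, i.2, by simp⟩

theorem card_le_or_cube_le (A : Finset ℝ) :
    (#A - 1) * #Λ ≤ 4 * #(gridPoints A Λ) ∨
      (#A - 1) ^ 3 * #Λ ≤ 16 * #(gridPoints A Λ) ^ 2 := by
  obtain ⟨c, hc, hA⟩ := exists_strictMonoOn_image_range A
  have := card_le_or_cube_le_of_strictMonoOn Λ hc
  rwa [hA] at this

end LineGrid

namespace PlaneLine

def cross (w v : Pt) : ℝ := w.1 * v.2 - w.2 * v.1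

lemma cross_eq_zero_iff_mem_span {v : Pt} (hv : v ≠ 0) (w : Pt) :
    cross w v = 0 ↔ w ∈ ℝ ∙ v := by
  rw [Submodule.mem_span_singleton]
  constructor
  · intro h
    rw [cross, sub_eq_zero] at h
    by_cases h₁ : v.1 = 0
    · have h₂ : v.2 ≠ 0 := fun h₂ => hv (Prod.ext h₁ h₂)
      have hw : w.1 = 0 := by simpa [h₁, h₂] using h
      exact ⟨w.2 / v.2, Prod.ext (by simp [h₁, hw]) (by simp [h₂])⟩
    · refine ⟨w.1 / v.1, Prod.ext (by simp [h₁]) ?_⟩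
      simp only [Prod.smul_snd, smul_eq_mul]
      field_simp
      linarith
  · rintro ⟨a, rfl⟩
    simp only [cross, Prod.smul_fst, Prod.smul_snd, smul_eq_mul]
    ring

lemma _root_.IsLine.exists_direction_eq_span {l : Ln} (hl : IsLine l) :
    ∃ v : Pt, v ≠ 0 ∧ l.direction = ℝ ∙ v := by
  obtain ⟨v, hv, hv0⟩ := (Submodule.ne_bot_iff l.direction).1 fun h => by
    rw [IsLine, h, finrank_bot] at hl
    exact zero_ne_one hl
  refine ⟨v, hv0, (Submodule.eq_of_le_of_finrank_eq ?_ ?_).symm⟩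
  · exact Submodule.span_singleton_le_iff_mem _ _ |>.2 hv
  · rw [finrank_span_singleton hv0, hl]

lemma _root_.IsLine.nonempty_s7 {l : Ln} (hl : IsLine l) : (l : Set Pt).Nonempty := by
  rw [AffineSubspace.nonempty_iff_ne_bot]
  rintro rfl
  rw [IsLine, AffineSubspace.direction_bot, finrank_bot] at hl
  exact zero_ne_one hl

lemma mem_iff_cross_sub_eq_zero {l : Ln} {v p : Pt} (hv : v ≠ 0) (hdir : l.direction = ℝ ∙ v)
    (hp : p ∈ l) (x : Pt) : x ∈ l ↔ cross (x - p) v = 0 := by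
  rw [cross_eq_zero_iff_mem_span hv, ← hdir, ← AffineSubspace.vsub_right_mem_direction_iff_mem hp]
  rfl

/-- Coordinates in which the lines of direction `u` are vertical. -/
def coords (u x : Pt) : ℝ × ℝ := (cross x u, x.1 * u.1 + x.2 * u.2)

lemma normSq_ne_zero {u : Pt} (hu : u ≠ 0) : u.1 ^ 2 + u.2 ^ 2 ≠ 0 := fun h =>
  hu (Prod.ext (pow_eq_zero_iff two_ne_zero |>.1 (by nlinarith [sq_nonneg u.1, sq_nonneg u.2]))
    (pow_eq_zero_iff two_ne_zero |>.1 (by nlinarith [sq_nonneg u.1, sq_nonneg u.2])))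

lemma coords_bijective {u : Pt} (hu : u ≠ 0) : Function.Bijective (coords u) := by
  have hD := normSq_ne_zero hu
  refine Function.bijective_iff_has_inverse.2 ⟨fun y =>
    ((u.2 * y.1 + u.1 * y.2) / (u.1 ^ 2 + u.2 ^ 2), (u.2 * y.2 - u.1 * y.1) / (u.1 ^ 2 + u.2 ^ 2)),
    fun x => ?_, fun y => ?_⟩
  all_goals
    simp only [coords, cross]
    ext <;> field_simp <;> ring

lemma exists_forall_mem_iff_coords_fst_eq {u : Pt} {l : Ln} (hl : IsLine l) (hu : u ≠ 0)
    (hdir : l.direction = ℝ ∙ u) : ∃ a : ℝ, ∀ x, x ∈ l ↔ (coords u x).1 = a := by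
  obtain ⟨p, hp⟩ := hl.nonempty_s7
  refine ⟨(coords u p).1, fun x => ?_⟩
  have : cross (x - p) u = (coords u x).1 - (coords u p).1 := by
    simp only [coords, cross, Prod.fst_sub, Prod.snd_sub]
    ring
  rw [mem_iff_cross_sub_eq_zero hu hdir hp, this, sub_eq_zero]

lemma exists_forall_mem_iff_coords_snd_eq {u : Pt} {l : Ln} (hl : IsLine l) (hu : u ≠ 0)
    (hdir : l.direction ≠ ℝ ∙ u) :
    ∃ m : ℝ × ℝ, ∀ x, x ∈ l ↔ (coords u x).2 = LineGrid.height m (coords u x).1 := by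
  obtain ⟨v, hv, hvdir⟩ := hl.exists_direction_eq_span
  obtain ⟨p, hp⟩ := hl.nonempty_s7
  have hvu : cross v u ≠ 0 := fun h => hdir <| hvdir.trans <| le_antisymm
    ((Submodule.span_singleton_le_iff_mem _ _).2 ((cross_eq_zero_iff_mem_span hu v).1 h))
    ((Submodule.span_singleton_le_iff_mem _ _).2 ((cross_eq_zero_iff_mem_span hv u).1
      (by rw [cross] at h ⊢; linarith)))
  set s := (coords u v).2 / cross v u
  have hs : cross v u * s = (coords u v).2 := mul_div_cancel₀ _ hvu
  refine ⟨(s, (coords u p).2 - s * (coords u p).1), fun x => ?_⟩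
  have key : cross v u * ((coords u x).2 -
      LineGrid.height (s, (coords u p).2 - s * (coords u p).1) (coords u x).1) =
      -(u.1 ^ 2 + u.2 ^ 2) * cross (x - p) v := by
    -- `ψ w * φ v - φ w * ψ v = -|u|² * cross w v` for the coordinates `(φ, ψ) = coords u`
    simp only [coords, cross, LineGrid.height, Prod.fst_sub, Prod.snd_sub] at hs ⊢
    linear_combination (p.1 * u.2 - p.2 * u.1 - (x.1 * u.2 - x.2 * u.1)) * hs
  rw [← sub_eq_zero, ← mul_eq_zero_iff_left hvu, key,
    mul_eq_zero_iff_left (neg_ne_zero.2 (normSq_ne_zero hu)),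
    mem_iff_cross_sub_eq_zero hv hvdir hp]

end PlaneLine

lemma sixteenth_mul_sq_mul_sqrt_le {k N n : ℕ} (hk : 2 ≤ k) (hN : 4 ≤ N)
    (h : (k - 1) * ((N - 1) * k) ≤ 4 * n ∨ (k - 1) ^ 3 * ((N - 1) * k) ≤ 16 * n ^ 2) :
    1 / 16 * (k : ℝ) ^ 2 * √N ≤ n := by
  have hk' : (k : ℝ) / 2 ≤ ((k - 1 : ℕ) : ℝ) := by
    have : (2 : ℝ) ≤ k := by exact_mod_cast hk
    rw [Nat.cast_sub (by omega), Nat.cast_one]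
    linarith
  have hN' : (N : ℝ) / 2 ≤ ((N - 1 : ℕ) : ℝ) := by
    have : (4 : ℝ) ≤ N := by exact_mod_cast hN
    rw [Nat.cast_sub (by omega), Nat.cast_one]
    linarith
  rcases h with h | h
  · have h : ((k - 1 : ℕ) : ℝ) * (((N - 1 : ℕ) : ℝ) * k) ≤ 4 * n := by exact_mod_cast h
    have hsqrt : √(N : ℝ) ≤ N := Real.sqrt_le_self_iff.2 (Or.inr (by exact_mod_cast (by omega)))
    calc 1 / 16 * (k : ℝ) ^ 2 * √N ≤ 1 / 4 * ((k : ℝ) / 2 * ((N : ℝ) / 2 * k)) := by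
          nlinarith [sq_nonneg (k : ℝ)]
      _ ≤ 1 / 4 * (((k - 1 : ℕ) : ℝ) * (((N - 1 : ℕ) : ℝ) * k)) := by gcongr
      _ ≤ n := by linarith
  · have h : ((k - 1 : ℕ) : ℝ) ^ 3 * (((N - 1 : ℕ) : ℝ) * k) ≤ 16 * (n : ℝ) ^ 2 := by
      exact_mod_cast h
    refine (pow_le_pow_iff_left₀ (by positivity) (Nat.cast_nonneg n) two_ne_zero).1 ?_
    calc (1 / 16 * (k : ℝ) ^ 2 * √N) ^ 2
          = 1 / 16 * (((k : ℝ) / 2) ^ 3 * ((N : ℝ) / 2 * k)) := by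
          rw [mul_pow, Real.sq_sqrt (Nat.cast_nonneg N)]
          ring
      _ ≤ 1 / 16 * (((k - 1 : ℕ) : ℝ) ^ 3 * (((N - 1 : ℕ) : ℝ) * k)) := by gcongr
      _ ≤ (n : ℝ) ^ 2 := by linarith

lemma ncard_eq_card_gridPoints {κ : Pt → ℝ × ℝ} (hκ : Function.Bijective κ) {V L : Set Ln}
    (hV : V.Finite) (hL : L.Finite)
    (hvert : ∀ l ∈ V, ∃ a : ℝ, ∀ x, x ∈ l ↔ (κ x).1 = a)
    (hgraph : ∀ l ∈ L, ∃ m : ℝ × ℝ, ∀ x, x ∈ l ↔ (κ x).2 = LineGrid.height m (κ x).1) :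
    ∃ (A : Finset ℝ) (Λ : Finset (ℝ × ℝ)), #A = V.ncard ∧ #Λ = L.ncard ∧
      {x | ∃ l ∈ V, ∃ l' ∈ L, x ∈ l ∧ x ∈ l'}.ncard = #(LineGrid.gridPoints A Λ) := by
  choose! a ha using hvert
  choose! m hm using hgraph
  have ha_inj : Set.InjOn a V := fun l hl l' hl' h =>
    SetLike.ext fun x => by rw [ha l hl, ha l' hl', h]
  have hm_inj : Set.InjOn m L := fun l hl l' hl' h =>
    SetLike.ext fun x => by rw [hm l hl, hm l' hl', h]
  refine ⟨(hV.image a).toFinset, (hL.image m).toFinset, ?_, ?_, ?_⟩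
  · rw [← Set.ncard_eq_toFinset_card _ (hV.image a), ha_inj.ncard_image]
  · rw [← Set.ncard_eq_toFinset_card _ (hL.image m), hm_inj.ncard_image]
  rw [← Set.ncard_image_of_injective _ hκ.injective, ← Set.ncard_coe_finset]
  congr 1
  ext y
  simp only [LineGrid.gridPoints, coe_image₂, Set.Finite.coe_toFinset, Set.mem_image2,
    Set.mem_image]
  constructor
  · rintro ⟨x, ⟨l, hl, l', hl', hxl, hxl'⟩, rfl⟩
    refine ⟨a l, ⟨l, hl, rfl⟩, m l', ⟨l', hl', rfl⟩, ?_⟩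
    have hx₁ := (ha l hl x).1 hxl
    have hx₂ := (hm l' hl' x).1 hxl'
    rw [hx₁] at hx₂
    exact Prod.ext hx₁.symm hx₂.symm
  · rintro ⟨_, ⟨l, hl, rfl⟩, _, ⟨l', hl', rfl⟩, rfl⟩
    obtain ⟨x, hx⟩ := hκ.surjective (LineGrid.graphPt (m l') (a l))
    refine ⟨x, ⟨l, hl, l', hl', (ha l hl x).2 (by rw [hx]; rfl), (hm l' hl' x).2 ?_⟩, hx⟩
    rw [hx]
    rfl

lemma ncard_biUnion_Ico {α : Type*} {F : ℕ → Set α} {a b k : ℕ}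
    (hfin : ∀ j ∈ Set.Ico a b, (F j).Finite) (hcard : ∀ j ∈ Set.Ico a b, (F j).ncard = k)
    (hdisj : (Set.Ico a b).PairwiseDisjoint F) :
    (⋃ j ∈ Set.Ico a b, F j).ncard = (b - a) * k := by
  rw [(Set.finite_Ico a b).ncard_biUnion hfin hdisj, ← coe_Ico, finsum_mem_coe_finset,
    sum_congr rfl fun j hj => hcard j (by simpa using hj), sum_const, Nat.card_Ico, smul_eq_mul]

/-- Szemerédi–Trotter-type bound: there is a constant `c > 0` such that for `N ≥ 4`
families `F 0, …, F (N-1)` of `k ≥ 2` parallel lines each, no two families mutually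
parallel, the set of intersection points of the lines of `F 0` with the lines of the
other families has at least `c * k^2 * √N` elements. -/
theorem stmt_7 :
    ∃ c : ℝ, 0 < c ∧
      ∀ (N k : ℕ), 4 ≤ N → 2 ≤ k → ∀ F : ℕ → Set Ln,
        (∀ i, i < N → (∀ l ∈ F i, IsLine l)) →
        (∀ i, i < N → (F i).ncard = k) →
        (∀ i, i < N → ∀ l ∈ F i, ∀ l' ∈ F i,
          AffineSubspace.direction l = AffineSubspace.direction l') →
        (∀ i j, i < N → j < N → i ≠ j → ∀ l ∈ F i, ∀ l' ∈ F j,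
          AffineSubspace.direction l ≠ AffineSubspace.direction l') →
        c * (k : ℝ) ^ 2 * Real.sqrt N ≤
          (({x : Pt | ∃ j, 1 ≤ j ∧ j < N ∧ ∃ l ∈ F 0, ∃ l' ∈ F j, x ∈ l ∧ x ∈ l'}).ncard : ℝ) := by
  refine ⟨1 / 16, by norm_num, fun N k hN hk F hline hcard hpar hnpar => ?_⟩
  have h0 : 0 < N := by omega
  have hfin : ∀ i < N, (F i).Finite := fun i hi =>
    Set.finite_of_ncard_ne_zero (by rw [hcard i hi]; omega)
  obtain ⟨l₀, hl₀⟩ : (F 0).Nonempty := Set.nonempty_of_ncard_ne_zero (by rw [hcard 0 h0]; omega)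
  obtain ⟨u, hu, hdir₀⟩ := (hline 0 h0 l₀ hl₀).exists_direction_eq_span
  set L := ⋃ j ∈ Set.Ico 1 N, F j
  have hL : L.ncard = (N - 1) * k := ncard_biUnion_Ico (fun j hj => hfin j hj.2)
    (fun j hj => hcard j hj.2) fun i hi j hj hij =>
      Set.disjoint_left.2 fun l hli hlj => hnpar i j hi.2 hj.2 hij l hli l hlj rfl
  obtain ⟨A, Λ, hA, hΛ, hP⟩ := ncard_eq_card_gridPoints (PlaneLine.coords_bijective hu)
    (hfin 0 h0) ((Set.finite_Ico 1 N).biUnion fun j hj => hfin j hj.2)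
    (fun l hl => PlaneLine.exists_forall_mem_iff_coords_fst_eq (hline 0 h0 l hl) hu
      ((hpar 0 h0 l hl l₀ hl₀).trans hdir₀))
    (fun l hl => by
      obtain ⟨j, ⟨hj, hjN⟩, hl⟩ := Set.mem_iUnion₂.1 hl
      exact PlaneLine.exists_forall_mem_iff_coords_snd_eq (hline j hjN l hl) hu
        (hdir₀ ▸ hnpar j 0 hjN h0 (by omega) l hl l₀ hl₀))
  have hset : {x : Pt | ∃ j, 1 ≤ j ∧ j < N ∧ ∃ l ∈ F 0, ∃ l' ∈ F j, x ∈ l ∧ x ∈ l'} =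
      {x | ∃ l ∈ F 0, ∃ l' ∈ L, x ∈ l ∧ x ∈ l'} := by
    ext x
    simp only [L, Set.mem_iUnion₂, Set.mem_Ico]
    exact ⟨fun ⟨j, hj, hjN, l, hl, l', hl', hx⟩ => ⟨l, hl, l', ⟨j, ⟨hj, hjN⟩, hl'⟩, hx⟩,
      fun ⟨l, hl, l', ⟨j, ⟨hj, hjN⟩, hl'⟩, hx⟩ => ⟨j, hj, hjN, l, hl, l', hl', hx⟩⟩
  have hcount := LineGrid.card_le_or_cube_le Λ A
  rw [hA, hΛ, hcard 0 h0, hL] at hcount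
  rw [hset, hP]
  exact sixteenth_mul_sq_mul_sqrt_le hk hN hcount
end
end
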